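/- arXiv:2404.01251 — 2 statements merged into one kernel-verified Lean document; each statement's English description precedes it below -/
import Mathlib

section
/- Let z ∈ H¹(Ω) satisfy a(z, z_+ − z) ≥ (F, z_+ − z) and a(z, −z) ≥ (F, −z) and a(z, z) ≥ (F, z) where F ≥ 0 a.e. Then z_- = 0 a.e., that is z ≥ 0 a.e. in Ω. -/
open MeasureTheory

/-- If z ∈ H¹(Ω) satisfies a(z, z₊ − z) ≥ (F, z₊ − z), a(z, −z) ≥ (F, −z)
and a(z, z) ≥ (F, z) with F ≥ 0 a.e., then z₋ = 0 a.e., i.e. z ≥ 0 a.e. in Ω.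
The H¹ structure enters through the symmetric bilinear form a, the orthogonality
fact a(z₊, z₋) = 0 and the coercivity ‖z₋‖²_{L²} ≤ ‖z₋‖²_{H¹} = a(z₋, z₋). -/
theorem nonneg_of_dual_variational_inequalities
    (Ω : Set (EuclideanSpace ℝ (Fin 2))) (hΩo : IsOpen Ω)
    (hΩb : Bornology.IsBounded Ω)
    (μ : Measure (EuclideanSpace ℝ (Fin 2))) (hμ : μ = volume.restrict Ω)
    (a : (EuclideanSpace ℝ (Fin 2) → ℝ) →ₗ[ℝ]
         (EuclideanSpace ℝ (Fin 2) → ℝ) →ₗ[ℝ] ℝ)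
    (hsymm : ∀ u v, a u v = a v u)
    (z F : EuclideanSpace ℝ (Fin 2) → ℝ)
    (hF : 0 ≤ᵐ[μ] F)
    (hFzm : Integrable (fun x => F x * min (z x) 0) μ)
    (hzm2 : Integrable (fun x => (min (z x) 0) ^ 2) μ)
    (horth : a (fun x => max (z x) 0) (fun x => min (z x) 0) = 0)
    (hcoerc : ∫ x, (min (z x) 0) ^ 2 ∂μ
        ≤ a (fun x => min (z x) 0) (fun x => min (z x) 0))
    (hVI1 : ∫ x, F x * (max (z x) 0 - z x) ∂μ ≤ a z ((fun x => max (z x) 0) - z))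
    (hVI2 : ∫ x, F x * (-(z x)) ∂μ ≤ a z (-z))
    (hVI3 : ∫ x, F x * z x ∂μ ≤ a z z) :
    ∀ᵐ x ∂μ, min (z x) 0 = 0 := by
  set zp : EuclideanSpace ℝ (Fin 2) → ℝ := fun x => max (z x) 0 with hzp
  set zm : EuclideanSpace ℝ (Fin 2) → ℝ := fun x => min (z x) 0 with hzm
  have hsum : z = zp + zm := by
    funext x
    simp only [Pi.add_apply, hzp, hzm]
    have := max_add_min (z x) 0
    linarith
  have hdiff : zp - z = -zm := by
    funext x
    simp only [Pi.sub_apply, Pi.neg_apply, hzp, hzm]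
    have := max_add_min (z x) 0
    linarith
  have hval : a z (zp - z) = - a zm zm := by
    rw [hdiff, map_neg]
    have : a z zm = a zm zm := by
      rw [hsymm z zm, hsum, map_add, hsymm zm zp, horth, zero_add]
    rw [this]
  have hint : (0:ℝ) ≤ ∫ x, F x * (zp x - z x) ∂μ := by
    apply integral_nonneg_of_ae
    filter_upwards [hF] with x hFx
    have h1 : zm x ≤ 0 := min_le_right _ _
    have h2 : zp x - z x = -zm x := by
      have := congrFun hdiff x; simpa using this
    rw [h2]
    exact mul_nonneg hFx (by linarith)
  have hA : a zm zm ≤ 0 := by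
    have := le_trans hint hVI1
    rw [show a z ((fun x => max (z x) 0) - z) = a z (zp - z) from rfl, hval] at this
    linarith
  have hI : ∫ x, zm x ^ 2 ∂μ = 0 :=
    le_antisymm (le_trans hcoerc hA)
      (integral_nonneg fun x => sq_nonneg _)
  have := (integral_eq_zero_iff_of_nonneg (fun x => sq_nonneg (zm x)) hzm2).mp hI
  filter_upwards [this] with x hx
  have : zm x ^ 2 = 0 := hx
  exact pow_eq_zero_iff (n := 2) (by norm_num) |>.mp this
end

section
/- Let z ∈ W^{2,q}(Ω) for q ∈ (1, 4/3), Ω ⊆ ℝ². Then the nonlinear interpolant Π(z) = I(z) − R satisfies, for every element K of a shape-regular triangulation with meshsize h, ‖z − Π(z)‖_{L^q(K)} ≤ C h² ‖z‖_{W^{2,q}(K̂)}, where K̂ is the patch of K. -/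
open Finset

variable {X ι : Type*}

/-- Piecewise linear Lagrange interpolant I(z) = Σ_i z(x_i) φ_i. -/
noncomputable def lagr [Fintype ι] (node : ι → X) (φ : ι → X → ℝ) (z : X → ℝ) :
    X → ℝ :=
  fun x => ∑ i, z (node i) * φ i x

/-- Nodal correction c_i = max_{y ∈ x̂_i} (I(z)(y) − z(y)). -/
noncomputable def corr [Fintype ι] (node : ι → X) (φ : ι → X → ℝ)
    (patch : ι → Set X) (z : X → ℝ) (i : ι) : ℝ :=
  sSup ((fun y => lagr node φ z y - z y) '' patch i)

/-- The correction function R = Σ_i c_i φ_i, so that Π(z) = I(z) − R. -/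
noncomputable def Rfun [Fintype ι] (node : ι → X) (φ : ι → X → ℝ)
    (patch : ι → Set X) (z : X → ℝ) : X → ℝ :=
  fun x => ∑ i, corr node φ patch z i * φ i x

/-- For z ∈ W^{2,q}(Ω), q ∈ (1, 4/3), and a shape-regular
triangulation T with meshsize h, the nonlinear interpolant Π(z) = I(z) − R
satisfies ‖z − Π(z)‖_{L^q(K)} ≤ C h² ‖z‖_{W^{2,q}(K̂)} for every element K ∈ T,
where K̂ = hat K is the patch of K.  The W^{2,q} data are encoded by:
`Nq K` the L^q(K) norm functional (nonnegative, triangle inequality),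
`sob K` = ‖z‖_{W^{2,q}(K)}, the standard L^q and L^∞ Lagrange interpolation
estimates, the lumped-L^q-norm bound for the piecewise linear R, patches of
nodes of K contained in K̂, and a bounded number of nodes per element. -/
theorem one_sided_interpolant_optimal_approximation
    [Fintype ι]
    (T : Set (Set X)) (hat : Set X → Set X) (nodesOf : Set X → Finset ι)
    (node : ι → X) (φ : ι → X → ℝ) (patch : ι → Set X)
    (Nq : Set X → (X → ℝ) → ℝ) (sob : Set X → ℝ)
    (h q C₀ : ℝ) (z : X → ℝ)
    (hq : 1 < q ∧ q < 4 / 3) (hh : 0 < h) (hC : 0 < C₀)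
    (hNqnn : ∀ K f, 0 ≤ Nq K f)
    (htri : ∀ K (f g : X → ℝ), Nq K (f + g) ≤ Nq K f + Nq K g)
    (hsobnn : ∀ K, 0 ≤ sob K)
    (hsobmono : ∀ K ∈ T, sob K ≤ sob (hat K))
    (hIq : ∀ K ∈ T,
      Nq K (fun x => z x - lagr node φ z x) ≤ C₀ * h ^ 2 * sob K)
    (hlump : ∀ K ∈ T,
      Nq K (Rfun node φ patch z) ^ q
        ≤ C₀ * h ^ 2 * ∑ i ∈ nodesOf K, |corr node φ patch z i| ^ q)
    (hLinf : ∀ K ∈ T, ∀ x ∈ hat K,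
      |z x - lagr node φ z x| ≤ C₀ * h ^ (2 - 2 / q) * sob (hat K))
    (hpatchsub : ∀ K ∈ T, ∀ i ∈ nodesOf K, patch i ⊆ hat K)
    (hcard : ∀ K ∈ T, (nodesOf K).card ≤ 4) :
    ∃ C > 0, ∀ K ∈ T,
      Nq K (fun x => z x - (lagr node φ z x - Rfun node φ patch z x))
        ≤ C * h ^ 2 * sob (hat K) := by
  obtain ⟨hq1, hq2⟩ := hq
  have hqpos : 0 < q := by linarith
  set D : ℝ := (4 * C₀) ^ (1 / q) * C₀ with hD
  have hDpos : 0 < D := by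
    apply mul_pos _ hC
    exact Real.rpow_pos_of_pos (by linarith) _
  refine ⟨C₀ + D, by positivity, fun K hK => ?_⟩
  set B : ℝ := C₀ * h ^ (2 - 2 / q) * sob (hat K) with hBdef
  have hBnn : 0 ≤ B := by
    have := hsobnn (hat K)
    have : 0 ≤ h ^ (2 - 2 / q) := Real.rpow_nonneg hh.le _
    positivity
  -- bound on each correction
  have hc : ∀ i ∈ nodesOf K, |corr node φ patch z i| ≤ B := by
    intro i hi
    have hub : ∀ v ∈ (fun y => lagr node φ z y - z y) '' patch i, v ≤ B := by
      rintro v ⟨y, hy, rfl⟩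
      have := hLinf K hK y (hpatchsub K hK i hi hy)
      have h2 : |lagr node φ z y - z y| ≤ B := by rwa [abs_sub_comm] at this
      exact (abs_le.mp h2).2
    rw [abs_le]
    constructor
    · rcases Set.eq_empty_or_nonempty (patch i) with he | ⟨y, hy⟩
      · simp [corr, he, hBnn]
      · refine le_trans ?_ (le_csSup ⟨B, fun v hv => hub v hv⟩
          (Set.mem_image_of_mem _ hy))
        have := hLinf K hK y (hpatchsub K hK i hi hy)
        have h2 : |lagr node φ z y - z y| ≤ B := by rwa [abs_sub_comm] at this
        exact (abs_le.mp h2).1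
    · exact Real.sSup_le hub hBnn
  -- bound on the sum
  have hsum : ∑ i ∈ nodesOf K, |corr node φ patch z i| ^ q ≤ 4 * B ^ q := by
    calc ∑ i ∈ nodesOf K, |corr node φ patch z i| ^ q
        ≤ ∑ _i ∈ nodesOf K, B ^ q := by
          refine Finset.sum_le_sum fun i hi => ?_
          exact Real.rpow_le_rpow (abs_nonneg _) (hc i hi) hqpos.le
      _ = (nodesOf K).card * B ^ q := by
          rw [Finset.sum_const, nsmul_eq_mul]
      _ ≤ 4 * B ^ q := by
          have hBq : 0 ≤ B ^ q := Real.rpow_nonneg hBnn _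
          have := hcard K hK
          have h4 : ((nodesOf K).card : ℝ) ≤ 4 := by exact_mod_cast this
          exact mul_le_mul_of_nonneg_right h4 hBq
  -- bound on Nq K R
  have hRbound : Nq K (Rfun node φ patch z) ≤ D * h ^ 2 * sob (hat K) := by
    have hRq : Nq K (Rfun node φ patch z) ^ q ≤ (D * h ^ 2 * sob (hat K)) ^ q := by
      have h1 : Nq K (Rfun node φ patch z) ^ q ≤ C₀ * h ^ 2 * (4 * B ^ q) :=
        le_trans (hlump K hK) (by
          have : (0:ℝ) ≤ C₀ * h ^ 2 := by positivity
          exact mul_le_mul_of_nonneg_left hsum this)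
      refine h1.trans_eq ?_
      have hh2 : (h : ℝ) ^ 2 = h ^ ((2 : ℕ) : ℝ) := (Real.rpow_natCast h 2).symm
      have hsnn := hsobnn (hat K)
      have hhq : 0 ≤ h ^ (2 - 2 / q) := Real.rpow_nonneg hh.le _
      rw [hBdef, hD]
      rw [Real.mul_rpow (by positivity) hsnn, Real.mul_rpow hC.le hhq]
      rw [Real.mul_rpow (by positivity) hsnn,
        Real.mul_rpow (by positivity) (by positivity),
        Real.mul_rpow (Real.rpow_nonneg (by linarith) _) hC.le]
      have e1 : ((4 * C₀) ^ (1 / q)) ^ q = 4 * C₀ := by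
        rw [← Real.rpow_mul (by linarith), one_div, inv_mul_cancel₀ hqpos.ne',
          Real.rpow_one]
      have e2 : (h ^ (2 - 2 / q)) ^ q = h ^ (2 * q - 2) := by
        rw [← Real.rpow_mul hh.le]; congr 1; field_simp
      have e3 : ((h : ℝ) ^ (2 : ℕ)) ^ q = h ^ (2 * q) := by
        rw [← Real.rpow_natCast h 2, ← Real.rpow_mul hh.le]; norm_num
      have e4 : (h : ℝ) ^ (2 : ℕ) * h ^ (2 * q - 2) = h ^ (2 * q) := by
        rw [← Real.rpow_natCast h 2, ← Real.rpow_add hh]; norm_num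
      rw [e1, e2, e3]
      linear_combination 4 * C₀ * C₀ ^ q * sob (hat K) ^ q * e4
    have hDnn : 0 ≤ D * h ^ 2 * sob (hat K) := by
      have := hsobnn (hat K); positivity
    exact (Real.rpow_le_rpow_iff (hNqnn K _) hDnn hqpos).mp hRq
  -- triangle inequality
  have hfun : (fun x => z x - (lagr node φ z x - Rfun node φ patch z x))
      = (fun x => z x - lagr node φ z x) + Rfun node φ patch z := by
    funext x; simp; ring
  calc Nq K (fun x => z x - (lagr node φ z x - Rfun node φ patch z x))
      ≤ Nq K (fun x => z x - lagr node φ z x) + Nq K (Rfun node φ patch z) := by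
        rw [hfun]; exact htri K _ _
    _ ≤ C₀ * h ^ 2 * sob (hat K) + D * h ^ 2 * sob (hat K) := by
        refine add_le_add (le_trans (hIq K hK) ?_) hRbound
        have : 0 ≤ C₀ * h ^ 2 := by positivity
        exact mul_le_mul_of_nonneg_left (hsobmono K hK) this
    _ = (C₀ + D) * h ^ 2 * sob (hat K) := by ring
end
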